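/- Let b₁, b₂, c₁, c₂ > 0 with c₁/b₁ ≥ c₂/b₂, and let S : [0,∞) → [0,∞) be any function (the claim process path). Define X₁(t) = c₁t - b₁S(t), X₂(t) = c₂t - b₂S(t), and the offsets Oᵢ(t) = sup_{0≤s≤t} Xᵢ(s) - Xᵢ(t). Then for all t ≥ 0, (b₁/b₂)·O₂(t) ≥ O₁(t). -/

import Mathlib

/-! Write `k = b₁ / b₂` and `d = c₁ - k c₂`, so that `d ≥ 0` and `X₁(s) = k X₂(s) + d s`.
Since `s ↦ d s` is nonnegative and nondecreasing on `[0, t]`, it adds at most `d t` to the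
running supremum of `k X₂`, and exactly `d t` to the current value `X₁(t)`; hence the
offset of `X₁` is at most that of `k X₂`, which is `k` times the offset of `X₂`. -/

namespace Real

theorem sSup_image_const_mul {α : Type*} {k : ℝ} (hk : 0 ≤ k) (u : α → ℝ) (s : Set α) :
    sSup ((fun x => k * u x) '' s) = k * sSup (u '' s) := by
  rw [← Set.image_image (fun y => k * y) u, ← smul_eq_mul, ← sSup_smul_of_nonneg hk]
  rfl

theorem sSup_image_add_le_of_nonneg_of_le {α : Type*} (u h : α → ℝ) {s : Set α}
    (hs : s.Nonempty) {c : ℝ} (h_nonneg : ∀ x ∈ s, 0 ≤ h x) (h_le : ∀ x ∈ s, h x ≤ c) :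
    sSup ((fun x => u x + h x) '' s) ≤ sSup (u '' s) + c := by
  by_cases hbdd : BddAbove (u '' s)
  · refine csSup_le (hs.image _) ?_
    rintro _ ⟨x, hx, rfl⟩
    exact add_le_add (le_csSup hbdd ⟨x, hx, rfl⟩) (h_le x hx)
  · have hbdd' : ¬ BddAbove ((fun x => u x + h x) '' s) := by
      rintro ⟨M, hM⟩
      refine hbdd ⟨M, ?_⟩
      rintro _ ⟨x, hx, rfl⟩
      linarith [hM ⟨x, hx, rfl⟩, h_nonneg x hx]
    -- both suprema are the junk value `0`, and `0 ≤ c` because `s` is nonempty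
    obtain ⟨x, hx⟩ := hs
    rw [sSup_of_not_bddAbove hbdd, sSup_of_not_bddAbove hbdd', zero_add]
    exact (h_nonneg x hx).trans (h_le x hx)

end Real

theorem stmt_9_general (b₁ b₂ c₁ c₂ : ℝ) (hb₁ : 0 < b₁) (hb₂ : 0 < b₂)
    (hrat : c₁ / b₁ ≥ c₂ / b₂) (S : ℝ → ℝ) (t : ℝ) (ht : 0 ≤ t) :
    (b₁ / b₂) * (sSup ((fun s => c₂ * s - b₂ * S s) '' Set.Icc 0 t) - (c₂ * t - b₂ * S t))
      ≥ sSup ((fun s => c₁ * s - b₁ * S s) '' Set.Icc 0 t) - (c₁ * t - b₁ * S t) := by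
  set k := b₁ / b₂
  set d := c₁ - k * c₂
  have hk : 0 ≤ k := (div_pos hb₁ hb₂).le
  have hd : 0 ≤ d := by
    have := (div_le_div_iff₀ hb₂ hb₁).mp hrat
    rw [sub_nonneg, div_mul_eq_mul_div, div_le_iff₀ hb₂]
    linarith
  have hX₁ : (fun s => c₁ * s - b₁ * S s) = fun s => k * (c₂ * s - b₂ * S s) + d * s := by
    funext s
    simp only [d, k]
    field_simp
    ring
  have hsup := Real.sSup_image_add_le_of_nonneg_of_le (fun s => k * (c₂ * s - b₂ * S s))
    (fun s => d * s) ⟨0, Set.left_mem_Icc.mpr ht⟩ (c := d * t)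
    (fun s hs => mul_nonneg hd hs.1) (fun s hs => mul_le_mul_of_nonneg_left hs.2 hd)
  rw [Real.sSup_image_const_mul hk, ← hX₁] at hsup
  have hX₁t : c₁ * t - b₁ * S t = k * (c₂ * t - b₂ * S t) + d * t := congrFun hX₁ t
  linarith

/-- Pathwise offset comparison in the degenerate bivariate risk model: with
`Xᵢ(t) = cᵢt - bᵢS(t)` and offsets `Oᵢ(t) = sup_{0≤s≤t} Xᵢ(s) - Xᵢ(t)`, the condition
`c₁/b₁ ≥ c₂/b₂` implies `(b₁/b₂)·O₂(t) ≥ O₁(t)` for all `t ≥ 0`. -/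
theorem stmt_9 (b₁ b₂ c₁ c₂ : ℝ) (hb₁ : 0 < b₁) (hb₂ : 0 < b₂) (hc₁ : 0 < c₁) (hc₂ : 0 < c₂)
    (hrat : c₁ / b₁ ≥ c₂ / b₂) (S : ℝ → ℝ) (hS : ∀ s, 0 ≤ s → 0 ≤ S s) (t : ℝ) (ht : 0 ≤ t) :
    (b₁ / b₂) * (sSup ((fun s => c₂ * s - b₂ * S s) '' Set.Icc 0 t) - (c₂ * t - b₂ * S t))
      ≥ sSup ((fun s => c₁ * s - b₁ * S s) '' Set.Icc 0 t) - (c₁ * t - b₁ * S t) :=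
  stmt_9_general b₁ b₂ c₁ c₂ hb₁ hb₂ hrat S t ht
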